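/- For any u ∈ C_c^∞(ℝⁿ, ℂ), the L² norm of the Hessian is controlled by that of the Laplacian: ∑_{1≤i,j≤n} ∫_{ℝⁿ} |∂_{ij} u|² ≤ n ∫_{ℝⁿ} |Δu|². -/

import Mathlib

open MeasureTheory

namespace HessianAux

variable {n : ℕ} {F : Type*} [NormedAddCommGroup F] [NormedSpace ℝ F]

noncomputable def Dv (f : EuclideanSpace ℝ (Fin n) → F) (v : EuclideanSpace ℝ (Fin n)) :
    EuclideanSpace ℝ (Fin n) → F := fun x => fderiv ℝ f x v

lemma contDiff_Dv {f : EuclideanSpace ℝ (Fin n) → F} (hf : ContDiff ℝ (⊤ : ℕ∞) f)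
    (v : EuclideanSpace ℝ (Fin n)) : ContDiff ℝ (⊤ : ℕ∞) (Dv f v) :=
  (hf.fderiv_right (by simp)).clm_apply contDiff_const

lemma hcs_Dv {f : EuclideanSpace ℝ (Fin n) → F} (hf : HasCompactSupport f)
    (v : EuclideanSpace ℝ (Fin n)) : HasCompactSupport (Dv f v) :=
  (hf.fderiv (𝕜 := ℝ)).comp_left (g := fun L : EuclideanSpace ℝ (Fin n) →L[ℝ] F => L v) rfl

lemma ibp {f g : EuclideanSpace ℝ (Fin n) → ℝ}
    (hf : ContDiff ℝ (⊤ : ℕ∞) f) (hfc : HasCompactSupport f)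
    (hg : ContDiff ℝ (⊤ : ℕ∞) g) (hgc : HasCompactSupport g) (v : EuclideanSpace ℝ (Fin n)) :
    ∫ x, Dv f v x * g x = -∫ x, f x * Dv g v x := by
  obtain ⟨C, hC⟩ := ContDiff.lipschitzWith_of_hasCompactSupport hfc hf (by simp)
  obtain ⟨D, hD⟩ := ContDiff.lipschitzWith_of_hasCompactSupport hgc hg (by simp)
  have key := LipschitzWith.integral_lineDeriv_mul_eq (μ := volume) hC hD hgc v
  have h1 : ∀ x, lineDeriv ℝ f x v * g x = Dv f v x * g x := fun x => by
    rw [(hf.differentiable (by simp) x).lineDeriv_eq_fderiv]; rfl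
  have h2 : ∀ x, lineDeriv ℝ g x (-v) * f x = -(f x * Dv g v x) := fun x => by
    rw [(hg.differentiable (by simp) x).lineDeriv_eq_fderiv]
    simp [Dv, mul_comm]
  calc ∫ x, Dv f v x * g x = ∫ x, lineDeriv ℝ f x v * g x := by simp_rw [h1]
    _ = ∫ x, lineDeriv ℝ g x (-v) * f x := key
    _ = ∫ x, -(f x * Dv g v x) := by simp_rw [h2]
    _ = -∫ x, f x * Dv g v x := integral_neg _

lemma Dv_comm {f : EuclideanSpace ℝ (Fin n) → ℝ} (hf : ContDiff ℝ (⊤ : ℕ∞) f)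
    (v w : EuclideanSpace ℝ (Fin n)) : Dv (Dv f v) w = Dv (Dv f w) v := by
  funext x
  have hsymm : IsSymmSndFDerivAt ℝ f x :=
    (hf.contDiffAt (x := x)).isSymmSndFDerivAt (by rw [minSmoothness_of_isRCLikeNormedField]; exact WithTop.coe_le_coe.mpr le_top)
  have hdif : DifferentiableAt ℝ (fderiv ℝ f) x :=
    ((hf.fderiv_right (m := (⊤ : ℕ∞)) (by simp)).differentiable (by simp)) x
  have key : ∀ (a b : EuclideanSpace ℝ (Fin n)), Dv (Dv f a) b x = fderiv ℝ (fderiv ℝ f) x b a := by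
    intro a b
    have : Dv (Dv f a) b x = fderiv ℝ (fun y => (fderiv ℝ f y) a) x b := rfl
    rw [this, fderiv_clm_apply hdif (differentiableAt_const a)]
    simp
  rw [key, key, hsymm.eq]


lemma sq_eq {f : EuclideanSpace ℝ (Fin n) → ℝ} (hf : ContDiff ℝ (⊤ : ℕ∞) f) (hfc : HasCompactSupport f)
    (v w : EuclideanSpace ℝ (Fin n)) :
    ∫ x, (Dv (Dv f w) v x)^2 = ∫ x, Dv (Dv f v) v x * Dv (Dv f w) w x := by
  have hfw : ContDiff ℝ (⊤ : ℕ∞) (Dv f w) := contDiff_Dv hf w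
  have hfwc : HasCompactSupport (Dv f w) := hcs_Dv hfc w
  have hfv : ContDiff ℝ (⊤ : ℕ∞) (Dv f v) := contDiff_Dv hf v
  have hfvc : HasCompactSupport (Dv f v) := hcs_Dv hfc v
  have h1 : ∫ x, Dv (Dv f w) v x * Dv (Dv f w) v x
      = -∫ x, Dv f w x * Dv (Dv (Dv f w) v) v x :=
    ibp hfw hfwc (contDiff_Dv hfw v) (hcs_Dv hfwc v) v
  have h2 : Dv (Dv (Dv f w) v) v = Dv (Dv (Dv f v) v) w := by
    rw [Dv_comm hf w v, Dv_comm hfv v w]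
  have h3 : ∫ x, Dv (Dv (Dv f v) v) w x * Dv f w x
      = -∫ x, Dv (Dv f v) v x * Dv (Dv f w) w x :=
    ibp (contDiff_Dv hfv v) (hcs_Dv hfvc v) hfw hfwc w
  have h4 : ∫ x, Dv f w x * Dv (Dv (Dv f v) v) w x
      = -∫ x, Dv (Dv f v) v x * Dv (Dv f w) w x := by
    rw [← h3]; congr 1; funext x; ring
  calc ∫ x, (Dv (Dv f w) v x)^2 = ∫ x, Dv (Dv f w) v x * Dv (Dv f w) v x := by
        congr 1; funext x; ring
    _ = -∫ x, Dv f w x * Dv (Dv (Dv f w) v) v x := h1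
    _ = -∫ x, Dv f w x * Dv (Dv (Dv f v) v) w x := by rw [h2]
    _ = ∫ x, Dv (Dv f v) v x * Dv (Dv f w) w x := by rw [h4, neg_neg]

lemma hcs_zero {α M : Type*} [TopologicalSpace α] [Zero M] :
    HasCompactSupport (fun _ : α => (0 : M)) := by
  simp [HasCompactSupport, tsupport, Function.support]

lemma hcs_finsetSum {ι α M : Type*} [TopologicalSpace α] [AddCommMonoid M]
    (s : Finset ι) (g : ι → α → M) (h : ∀ i ∈ s, HasCompactSupport (g i)) :
    HasCompactSupport (fun x => ∑ i ∈ s, g i x) := by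
  classical
  induction s using Finset.induction_on with
  | empty => simpa using hcs_zero
  | insert _ _ hi ih =>
    simp only [Finset.sum_insert hi]
    exact (h _ (Finset.mem_insert_self _ _)).add
      (ih fun i his => h i (Finset.mem_insert_of_mem his))

lemma real_sum {f : EuclideanSpace ℝ (Fin n) → ℝ} (hf : ContDiff ℝ (⊤ : ℕ∞) f)
    (hfc : HasCompactSupport f) :
    ∑ i : Fin n, ∑ j : Fin n,
        ∫ x, (Dv (Dv f (EuclideanSpace.single j (1:ℝ))) (EuclideanSpace.single i (1:ℝ)) x)^2
      = ∫ x, (∑ i : Fin n,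
          Dv (Dv f (EuclideanSpace.single i (1:ℝ))) (EuclideanSpace.single i (1:ℝ)) x)^2 := by
  set e : Fin n → EuclideanSpace ℝ (Fin n) := fun i => EuclideanSpace.single i (1:ℝ) with he
  have hcont : ∀ i : Fin n, Continuous (fun x => Dv (Dv f (e i)) (e i) x) :=
    fun i => (contDiff_Dv (contDiff_Dv hf _) _).continuous
  have hsupp : ∀ i : Fin n, HasCompactSupport (fun x => Dv (Dv f (e i)) (e i) x) :=
    fun i => hcs_Dv (hcs_Dv hfc _) _
  have hint : ∀ i j : Fin n,
      Integrable (fun x => Dv (Dv f (e i)) (e i) x * Dv (Dv f (e j)) (e j) x) :=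
    fun i j => ((hcont i).mul (hcont j)).integrable_of_hasCompactSupport
      ((hsupp j).mul_left)
  calc ∑ i : Fin n, ∑ j : Fin n, ∫ x, (Dv (Dv f (e j)) (e i) x)^2
      = ∑ i : Fin n, ∑ j : Fin n, ∫ x, Dv (Dv f (e i)) (e i) x * Dv (Dv f (e j)) (e j) x := by
        refine Finset.sum_congr rfl fun i _ => Finset.sum_congr rfl fun j _ => ?_
        exact sq_eq hf hfc (e i) (e j)
    _ = ∑ i : Fin n, ∫ x, ∑ j : Fin n, Dv (Dv f (e i)) (e i) x * Dv (Dv f (e j)) (e j) x := by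
        refine Finset.sum_congr rfl fun i _ => ?_
        rw [integral_finset_sum _ fun j _ => hint i j]
    _ = ∫ x, ∑ i : Fin n, ∑ j : Fin n, Dv (Dv f (e i)) (e i) x * Dv (Dv f (e j)) (e j) x := by
        rw [integral_finset_sum _ fun i _ => integrable_finset_sum _ fun j _ => hint i j]
    _ = ∫ x, (∑ i : Fin n, Dv (Dv f (e i)) (e i) x)^2 := by
        congr 1; funext x; rw [sq, Finset.sum_mul_sum]

lemma Dv_clm (φ : ℂ →L[ℝ] ℝ) {g : EuclideanSpace ℝ (Fin n) → ℂ} (hg : ContDiff ℝ (⊤ : ℕ∞) g)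
    (v : EuclideanSpace ℝ (Fin n)) :
    Dv (fun y => φ (g y)) v = fun x => φ (Dv g v x) := by
  funext x
  have h := (φ.hasFDerivAt (x := g x)).comp x (hg.differentiable (by simp) x).hasFDerivAt
  show fderiv ℝ (φ ∘ g) x v = φ (fderiv ℝ g x v)
  rw [h.fderiv]; rfl

end HessianAux

open HessianAux

set_option maxHeartbeats 1000000 in
/-- for u ∈ C_c^∞(ℝⁿ,ℂ), the L² norm of the Hessian is
controlled by that of the Laplacian:
∑_{i,j} ∫ |∂_{ij}u|² ≤ n ∫ |Δu|². -/
theorem hessian_L2_le_laplacian_L2 (n : ℕ) (u : EuclideanSpace ℝ (Fin n) → ℂ)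
    (hu : ContDiff ℝ (⊤ : ℕ∞) u) (hcs : HasCompactSupport u) :
    ∑ i : Fin n, ∑ j : Fin n,
        ∫ x : EuclideanSpace ℝ (Fin n),
          ‖fderiv ℝ (fun y => fderiv ℝ u y (EuclideanSpace.single j (1:ℝ))) x
              (EuclideanSpace.single i (1:ℝ))‖^2
      ≤ (n : ℝ) * ∫ x : EuclideanSpace ℝ (Fin n),
          ‖∑ i : Fin n, fderiv ℝ (fun y => fderiv ℝ u y (EuclideanSpace.single i (1:ℝ))) x
              (EuclideanSpace.single i (1:ℝ))‖^2 := by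
  classical
  set e : Fin n → EuclideanSpace ℝ (Fin n) := fun i => EuclideanSpace.single i (1:ℝ) with he
  set a : EuclideanSpace ℝ (Fin n) → ℝ := fun y => Complex.reCLM (u y) with ha'
  set b : EuclideanSpace ℝ (Fin n) → ℝ := fun y => Complex.imCLM (u y) with hb'
  have ha : ContDiff ℝ (⊤ : ℕ∞) a := Complex.reCLM.contDiff.comp hu
  have hb : ContDiff ℝ (⊤ : ℕ∞) b := Complex.imCLM.contDiff.comp hu
  have hac : HasCompactSupport a := hcs.comp_left (map_zero Complex.reCLM)
  have hbc : HasCompactSupport b := hcs.comp_left (map_zero Complex.imCLM)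
  have hDDa : ∀ i j : Fin n,
      Dv (Dv a (e j)) (e i) = fun x => Complex.reCLM (Dv (Dv u (e j)) (e i) x) := by
    intro i j
    rw [ha', Dv_clm Complex.reCLM hu (e j)]
    exact Dv_clm Complex.reCLM (contDiff_Dv hu (e j)) (e i)
  have hDDb : ∀ i j : Fin n,
      Dv (Dv b (e j)) (e i) = fun x => Complex.imCLM (Dv (Dv u (e j)) (e i) x) := by
    intro i j
    rw [hb', Dv_clm Complex.imCLM hu (e j)]
    exact Dv_clm Complex.imCLM (contDiff_Dv hu (e j)) (e i)
  have hnorm : ∀ (i j : Fin n) x, ‖Dv (Dv u (e j)) (e i) x‖^2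
      = (Dv (Dv a (e j)) (e i) x)^2 + (Dv (Dv b (e j)) (e i) x)^2 := by
    intro i j x
    rw [hDDa, hDDb]
    simp only [Complex.reCLM_apply, Complex.imCLM_apply]
    rw [Complex.sq_norm, Complex.normSq_apply]
    ring
  have hIsq : ∀ {g : EuclideanSpace ℝ (Fin n) → ℝ}, ContDiff ℝ (⊤ : ℕ∞) g → HasCompactSupport g →
      Integrable (fun x => (g x)^2) := by
    intro g hg hgc
    have h1 : HasCompactSupport (fun x => (g x)^2) :=
      hgc.comp_left (g := fun t : ℝ => t^2) (by simp)
    exact ((hg.continuous.pow 2)).integrable_of_hasCompactSupport h1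
  have hL : ∀ i j : Fin n, (∫ x, ‖Dv (Dv u (e j)) (e i) x‖^2)
      = (∫ x, (Dv (Dv a (e j)) (e i) x)^2) + ∫ x, (Dv (Dv b (e j)) (e i) x)^2 := by
    intro i j
    rw [← integral_add (hIsq (contDiff_Dv (contDiff_Dv ha _) _) (hcs_Dv (hcs_Dv hac _) _))
      (hIsq (contDiff_Dv (contDiff_Dv hb _) _) (hcs_Dv (hcs_Dv hbc _) _))]
    exact integral_congr_ae (Filter.Eventually.of_forall fun x => hnorm i j x)
  have hlap : ∀ x, ‖∑ i : Fin n, Dv (Dv u (e i)) (e i) x‖^2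
      = (∑ i : Fin n, Dv (Dv a (e i)) (e i) x)^2 + (∑ i : Fin n, Dv (Dv b (e i)) (e i) x)^2 := by
    intro x
    rw [Complex.sq_norm, Complex.normSq_apply]
    rw [Complex.re_sum, Complex.im_sum]
    have h1 : ∀ i : Fin n, (Dv (Dv u (e i)) (e i) x).re = Dv (Dv a (e i)) (e i) x := by
      intro i; rw [hDDa]; rfl
    have h2 : ∀ i : Fin n, (Dv (Dv u (e i)) (e i) x).im = Dv (Dv b (e i)) (e i) x := by
      intro i; rw [hDDb]; rfl
    simp_rw [h1, h2]; ring
  have hsum_a : HasCompactSupport (fun x => ∑ i : Fin n, Dv (Dv a (e i)) (e i) x) :=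
    hcs_finsetSum _ _ fun i _ => hcs_Dv (hcs_Dv hac _) _
  have hsum_b : HasCompactSupport (fun x => ∑ i : Fin n, Dv (Dv b (e i)) (e i) x) :=
    hcs_finsetSum _ _ fun i _ => hcs_Dv (hcs_Dv hbc _) _
  have hconta : Continuous (fun x => ∑ i : Fin n, Dv (Dv a (e i)) (e i) x) :=
    continuous_finset_sum _ fun i _ => (contDiff_Dv (contDiff_Dv ha _) _).continuous
  have hcontb : Continuous (fun x => ∑ i : Fin n, Dv (Dv b (e i)) (e i) x) :=
    continuous_finset_sum _ fun i _ => (contDiff_Dv (contDiff_Dv hb _) _).continuous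
  have hIA : Integrable (fun x => (∑ i : Fin n, Dv (Dv a (e i)) (e i) x)^2) := by
    have h1 : HasCompactSupport (fun x => (∑ i : Fin n, Dv (Dv a (e i)) (e i) x)^2) :=
      hsum_a.comp_left (g := fun t : ℝ => t^2) (by simp)
    exact (hconta.pow 2).integrable_of_hasCompactSupport h1
  have hIB : Integrable (fun x => (∑ i : Fin n, Dv (Dv b (e i)) (e i) x)^2) := by
    have h1 : HasCompactSupport (fun x => (∑ i : Fin n, Dv (Dv b (e i)) (e i) x)^2) :=
      hsum_b.comp_left (g := fun t : ℝ => t^2) (by simp)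
    exact (hcontb.pow 2).integrable_of_hasCompactSupport h1
  have key : ∑ i : Fin n, ∑ j : Fin n, (∫ x, ‖Dv (Dv u (e j)) (e i) x‖^2)
      = ∫ x, ‖∑ i : Fin n, Dv (Dv u (e i)) (e i) x‖^2 := by
    calc ∑ i : Fin n, ∑ j : Fin n, (∫ x, ‖Dv (Dv u (e j)) (e i) x‖^2)
        = ∑ i : Fin n, ∑ j : Fin n, ((∫ x, (Dv (Dv a (e j)) (e i) x)^2)
            + ∫ x, (Dv (Dv b (e j)) (e i) x)^2) := by
          exact Finset.sum_congr rfl fun i _ => Finset.sum_congr rfl fun j _ => hL i j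
      _ = (∑ i : Fin n, ∑ j : Fin n, ∫ x, (Dv (Dv a (e j)) (e i) x)^2)
            + ∑ i : Fin n, ∑ j : Fin n, ∫ x, (Dv (Dv b (e j)) (e i) x)^2 := by
          simp [Finset.sum_add_distrib]
      _ = (∫ x, (∑ i : Fin n, Dv (Dv a (e i)) (e i) x)^2)
            + ∫ x, (∑ i : Fin n, Dv (Dv b (e i)) (e i) x)^2 := by
          rw [real_sum ha hac, real_sum hb hbc]
      _ = ∫ x, ((∑ i : Fin n, Dv (Dv a (e i)) (e i) x)^2
            + (∑ i : Fin n, Dv (Dv b (e i)) (e i) x)^2) := (integral_add hIA hIB).symm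
      _ = ∫ x, ‖∑ i : Fin n, Dv (Dv u (e i)) (e i) x‖^2 :=
          integral_congr_ae (Filter.Eventually.of_forall fun x => (hlap x).symm)
  show ∑ i : Fin n, ∑ j : Fin n, (∫ x, ‖Dv (Dv u (e j)) (e i) x‖^2)
      ≤ (n : ℝ) * ∫ x, ‖∑ i : Fin n, Dv (Dv u (e i)) (e i) x‖^2
  rw [key]
  have hnn : 0 ≤ ∫ x, ‖∑ i : Fin n, Dv (Dv u (e i)) (e i) x‖^2 :=
    integral_nonneg fun x => by positivity
  rcases Nat.eq_zero_or_pos n with h0 | h1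
  · subst h0
    simp
  · exact le_mul_of_one_le_left hnn (by exact_mod_cast h1)
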